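/- For every P ∈ S², the maps W_P and W_{−P} from RP² to itself are equal, and the fixed point set of W_P is exactly the singleton {p(P)}, i.e. {x̄ ∈ RP² | W_P(x̄) = x̄} = {p(P)}. -/

import Mathlib

noncomputable section

open Metric

abbrev E3 := EuclideanSpace ℝ (Fin 3)
abbrev S2 := Metric.sphere (0 : E3) 1

/-- Ordered configuration space. -/
def Conf (n : ℕ) (Y : Type*) [TopologicalSpace Y] : Type _ :=
  {y : Fin n → Y // Function.Injective y}

instance (n : ℕ) (Y : Type*) [TopologicalSpace Y] : TopologicalSpace (Conf n Y) :=
  instTopologicalSpaceSubtype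

/-- The setoid on `Conf n Y` given by the permutation action. -/
def permSetoid (n : ℕ) (Y : Type*) [TopologicalSpace Y] : Setoid (Conf n Y) where
  r a b := ∃ σ : Equiv.Perm (Fin n), b.1 = a.1 ∘ σ
  iseqv := by
    constructor
    · exact fun a => ⟨1, by ext i; simp⟩
    · rintro a b ⟨σ, h⟩
      exact ⟨σ⁻¹, by ext i; simp [h]⟩
    · rintro a b c ⟨σ, h⟩ ⟨τ, h'⟩
      exact ⟨σ * τ, by ext i; simp [h', h]⟩

/-- Unordered configuration space. -/
def UConf (n : ℕ) (Y : Type*) [TopologicalSpace Y] : Type _ :=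
  Quotient (permSetoid n Y)

instance (n : ℕ) (Y : Type*) [TopologicalSpace Y] : TopologicalSpace (UConf n Y) :=
  instTopologicalSpaceQuotient

lemma S2.ne_neg (x : S2) : (x : E3) ≠ -(x : E3) := by
  intro h
  have hx : (x : E3) = 0 := by
    have h2 : (x : E3) + (x : E3) = 0 := by
      nth_rewrite 2 [h]; simp
    have h3 : (2 : ℝ) • (x : E3) = 0 := by rw [two_smul]; exact h2
    have := smul_eq_zero.mp h3
    simpa using this
  have := x.2
  rw [mem_sphere_zero_iff_norm] at this
  rw [hx] at this
  simp at this

/-- The antipodal setoid on the sphere. -/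
def antipodalSetoid : Setoid S2 where
  r x y := (x : E3) = y ∨ (x : E3) = -y
  iseqv := by
    constructor
    · exact fun x => Or.inl rfl
    · rintro x y (h | h)
      · exact Or.inl h.symm
      · exact Or.inr (by rw [h]; simp)
    · rintro x y z (h | h) (h' | h')
      · exact Or.inl (h.trans h')
      · exact Or.inr (by rw [h, h'])
      · exact Or.inr (by rw [h, h'])
      · exact Or.inl (by rw [h, h']; simp)

/-- The real projective plane, as the quotient of the sphere by the antipodal map. -/
def RP2 : Type _ := Quotient antipodalSetoid

instance : TopologicalSpace RP2 := instTopologicalSpaceQuotient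

/-- The canonical projection from the sphere to the projective plane. -/
def pS2 : S2 → RP2 := Quotient.mk antipodalSetoid

lemma pS2.continuous : Continuous pS2 := continuous_quotient_mk'

/-- The underlying vector of the map `U_P`. -/
def Uvec (P x : E3) : E3 := (2 * inner ℝ P x : ℝ) • x - P

lemma Uvec.norm_eq (P x : E3) (hP : ‖P‖ = 1) (hx : ‖x‖ = 1) : ‖Uvec P x‖ = 1 := by
  have h1 : ‖Uvec P x‖ ^ 2 = 1 := by
    rw [Uvec, norm_sub_sq_real, norm_smul, real_inner_smul_left, real_inner_comm x P, hx, hP,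
      Real.norm_eq_abs, mul_one, one_pow, sq_abs]
    ring
  nlinarith [norm_nonneg (Uvec P x)]

lemma Uvec.neg (P x : E3) : Uvec P (-x) = Uvec P x := by
  simp [Uvec, inner_neg_right]

/-- The map `U_P` on the sphere. -/
def USph (P x : S2) : S2 :=
  ⟨Uvec P.1 x.1, by
    rw [mem_sphere_zero_iff_norm]
    exact Uvec.norm_eq _ _ (by simp [← mem_sphere_zero_iff_norm, P.2])
      (by simp [← mem_sphere_zero_iff_norm, x.2])⟩

lemma USph.continuous (P : S2) : Continuous (USph P) := by
  apply Continuous.subtype_mk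
  apply Continuous.sub
  · exact (continuous_const.mul (Continuous.inner (𝕜 := ℝ) continuous_const
      (continuous_subtype_val : Continuous (fun y : S2 => (y : E3))))).smul
      continuous_subtype_val
  · exact continuous_const

/-- The map `W_P` on the projective plane. -/
def WP (P : S2) : RP2 → RP2 :=
  Quotient.lift (fun x => pS2 (USph P x)) (by
    rintro a b (h | h)
    · have hab : a = b := Subtype.ext h
      show pS2 (USph P a) = pS2 (USph P b)
      rw [hab]
    · have hab : USph P a = USph P b :=
        Subtype.ext (show Uvec P.1 a.1 = Uvec P.1 b.1 by rw [h, Uvec.neg])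
      show pS2 (USph P a) = pS2 (USph P b)
      rw [hab])

lemma WP.continuous (P : S2) : Continuous (WP P) :=
  Continuous.quotient_lift (pS2.continuous.comp (USph.continuous P)) _

/-- `W_P` as a continuous map. -/
def WPc (P : S2) : C(RP2, RP2) := ⟨WP P, WP.continuous P⟩

lemma WPc_apply (P : S2) (x : S2) : WPc P (pS2 x) = pS2 (USph P x) := rfl

lemma Uvec.neg_left (P x : E3) : Uvec (-P) x = -Uvec P x := by
  simp only [Uvec, inner_neg_left, mul_neg, neg_smul, neg_sub']

/-- Comparing `⟪P, x⟫` with `⟪t • x, x⟫` forces `⟪P, x⟫ = t`. -/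
lemma Uvec.eq_smul_iff {P x : E3} (hx : ‖x‖ = 1) (t : ℝ) : Uvec P x = t • x ↔ P = t • x := by
  have hxx : inner ℝ x x = (1 : ℝ) := by rw [real_inner_self_eq_norm_sq, hx, one_pow]
  constructor
  · intro h
    have hP : P = (2 * inner ℝ P x - t) • x := by
      rw [sub_smul, ← h, Uvec, sub_sub_cancel]
    have hc : inner ℝ P x = t := by
      have := congrArg (fun v => inner ℝ v x) hP
      simp only [real_inner_smul_left, hxx, mul_one] at this
      linarith
    rwa [hc, two_mul, add_sub_cancel_right] at hP
  · rintro rfl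
    rw [Uvec, real_inner_smul_left, hxx, mul_one, mul_smul, two_smul, add_sub_cancel_right]

lemma pS2_eq_pS2_iff {x y : S2} : pS2 x = pS2 y ↔ (x : E3) = y ∨ (x : E3) = -y :=
  Quotient.eq

lemma WP_pS2 (P x : S2) : WP P (pS2 x) = pS2 (USph P x) := rfl

lemma WP_neg (P : S2) : WP (-P) = WP P := by
  funext z
  induction z using Quotient.ind with
  | _ x =>
    refine pS2_eq_pS2_iff.mpr (Or.inr ?_)
    simp only [USph, coe_neg_sphere, Uvec.neg_left]

lemma WP_pS2_eq_self_iff (P x : S2) : WP P (pS2 x) = pS2 x ↔ pS2 x = pS2 P := by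
  have hx : ‖(x : E3)‖ = 1 := mem_sphere_zero_iff_norm.mp x.2
  have hfix := Uvec.eq_smul_iff (P := P) hx 1
  have hflip := Uvec.eq_smul_iff (P := P) hx (-1)
  rw [one_smul] at hfix
  rw [neg_one_smul] at hflip
  rw [WP_pS2, pS2_eq_pS2_iff, pS2_eq_pS2_iff]
  exact or_congr (hfix.trans eq_comm) (hflip.trans (eq_comm.trans neg_eq_iff_eq_neg))

/-- `W_P = W_{-P}`, and the fixed point set of `W_P : RP² → RP²` is exactly `{p(P)}`. -/
theorem stmt5 (P : S2) :
    WP P = WP (-P) ∧ {z : RP2 | WP P z = z} = {pS2 P} :=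
  ⟨(WP_neg P).symm, Set.ext fun z => Quotient.inductionOn z (WP_pS2_eq_self_iff P)⟩
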